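/- arXiv:2102.01583 — 5 statements merged into one kernel-verified Lean document; each statement's English description precedes it below -/
import Mathlib

section
/- For all real x, |ψ'''(x)| ≤ 2β·(ψ''(x))^{3/2}, where ψ''(x) = H/(4 + Hβ²x²) and ψ'''(x) = −2H²β²x/(4 + Hβ²x²)². -/
/-! With `p = ψ'' x`, one has `ψ''' x = -2β · (βx) · p²`, so the claim reduces to
`|βx| · √p ≤ 1`, i.e. `β²x² · H ≤ 4 + Hβ²x²`. -/

lemma mul_div_add_mul_le_one {H c : ℝ} (hH : 0 ≤ H) (hc : 0 ≤ c) :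
    c * (H / (4 + H * c)) ≤ 1 := by
  rw [mul_div_assoc', div_le_one (by positivity)]
  linarith

lemma abs_mul_sq_le_rpow_three_halves {p y : ℝ} (hp : 0 ≤ p) (h : y ^ 2 * p ≤ 1) :
    |y| * p ^ 2 ≤ p ^ ((3 : ℝ) / 2) := by
  have hsplit : p ^ 2 = √p * p ^ ((3 : ℝ) / 2) := by
    rw [Real.sqrt_eq_rpow, ← Real.rpow_add' hp (by norm_num)]
    norm_num
  have hroot : |y| * √p ≤ 1 := by
    rw [← Real.sqrt_sq_eq_abs, ← Real.sqrt_mul (sq_nonneg y)]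
    exact Real.sqrt_le_one.mpr h
  rw [hsplit, ← mul_assoc]
  exact mul_le_of_le_one_left (by positivity) hroot

theorem stmt_3 (H β : ℝ) (hH : 0 < H) (hβ : 0 < β) :
    let ψ'' : ℝ → ℝ := fun x => H / (4 + H * β ^ 2 * x ^ 2)
    let ψ''' : ℝ → ℝ := fun x => -2 * H ^ 2 * β ^ 2 * x / (4 + H * β ^ 2 * x ^ 2) ^ 2
    ∀ x : ℝ, |ψ''' x| ≤ 2 * β * (ψ'' x) ^ ((3 : ℝ) / 2) := by
  intro ψ'' ψ''' x
  have hψ''' : ψ''' x = -(2 * β) * ((β * x) * ψ'' x ^ 2) := by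
    simp only [ψ''', ψ'']
    field_simp
  have hbound : (β * x) ^ 2 * ψ'' x ≤ 1 := by
    have := mul_div_add_mul_le_one hH.le (by positivity : 0 ≤ β ^ 2 * x ^ 2)
    simpa [ψ'', mul_pow, mul_assoc] using this
  have habs : |ψ''' x| = 2 * β * (|β * x| * ψ'' x ^ 2) := by
    rw [hψ''', abs_mul, abs_neg, abs_of_pos (by positivity), abs_mul, abs_of_nonneg (sq_nonneg (ψ'' x))]
  rw [habs]
  gcongr
  exact abs_mul_sq_le_rpow_three_halves (by positivity) hbound
end

section
/- For the function F(x) = −ψ'(ζ)·x₁ + ψ(x_N) + Σ_{i=1}^{N−1} ψ(x_{i+1} − x_i) on ℝ^N, where ψ is convex with 0 ≤ ψ'' ≤ H/4, the Hessian satisfies u^T ∇²F(x) u ≤ H‖u‖² for every x and u; hence F is H-smooth. -/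
/-!
Write `F x = c x + ∑ j, ψ (T j x)` with `c` linear and `T j` ranging over the differences
`x_{i+1} - x_i` and the last coordinate. The Hessian of `F` is `∑ j, ψ'' (T j x) • T j ⊗ T j`, so
by weighted Cauchy–Schwarz its operator norm is at most `H / 4` times the best constant in
`∑ j, (T j u) ^ 2 ≤ C * ‖u‖ ^ 2`, and `C = 4` works because `(a - b) ^ 2 ≤ 2 a ^ 2 + 2 b ^ 2` and
each coordinate enters at most two of the `T j`. A Hessian of norm at most `H` bounds the quadratic
form and, by the mean value theorem, makes the gradient `H`-Lipschitz.
-/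

open Finset

section Smoothness

variable {E : Type*} [NormedAddCommGroup E] [InnerProductSpace ℝ E] {F : E → ℝ}
  {F' : E → E →L[ℝ] ℝ} {F'' : E → E →L[ℝ] E →L[ℝ] ℝ}

theorem iteratedFDeriv_two_apply_le_of_hasFDerivAt (hF : ∀ x, HasFDerivAt F (F' x) x)
    (hF' : ∀ x, HasFDerivAt F' (F'' x) x) {C : ℝ} (hF'' : ∀ x, ‖F'' x‖ ≤ C) (x u : E) :
    iteratedFDeriv ℝ 2 F x ![u, u] ≤ C * ‖u‖ ^ 2 := by
  have hfderiv : fderiv ℝ F = F' := funext fun x => (hF x).fderiv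
  rw [iteratedFDeriv_two_apply, hfderiv, (hF' x).fderiv]
  calc F'' x u u ≤ ‖F'' x‖ * ‖u‖ * ‖u‖ := (le_abs_self _).trans ((F'' x).le_opNorm₂ u u)
    _ ≤ C * ‖u‖ ^ 2 := by rw [mul_assoc, ← sq]; gcongr; exact hF'' x

theorem norm_gradient_sub_le_of_hasFDerivAt [CompleteSpace E] (hF : ∀ x, HasFDerivAt F (F' x) x)
    (hF' : ∀ x, HasFDerivAt F' (F'' x) x) {C : ℝ} (hF'' : ∀ x, ‖F'' x‖ ≤ C) (x y : E) :
    ‖gradient F x - gradient F y‖ ≤ C * ‖x - y‖ := by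
  simp only [gradient, (hF _).fderiv, ← map_sub, LinearIsometryEquiv.norm_map]
  exact convex_univ.norm_image_sub_le_of_norm_hasFDerivWithin_le
    (fun z _ => (hF' z).hasFDerivWithinAt) (fun z _ => hF'' z) (Set.mem_univ y) (Set.mem_univ x)

end Smoothness

section RidgeSum

variable {E ι : Type*} [NormedAddCommGroup E] [InnerProductSpace ℝ E] [Fintype ι]

theorem norm_sum_smul_smulRight_le (T : ι → E →L[ℝ] ℝ) {w : ι → ℝ} {K C : ℝ} (hK : 0 ≤ K)
    (hC : 0 ≤ C) (hw : ∀ j, 0 ≤ w j ∧ w j ≤ K) (hT : ∀ u, ∑ j, T j u ^ 2 ≤ C * ‖u‖ ^ 2) :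
    ‖∑ j, (w j • T j).smulRight (T j)‖ ≤ K * C := by
  have weighted_le : ∀ u, ∑ j, w j * T j u ^ 2 ≤ K * (C * ‖u‖ ^ 2) := fun u =>
    calc ∑ j, w j * T j u ^ 2 ≤ ∑ j, K * T j u ^ 2 :=
          sum_le_sum fun j _ => mul_le_mul_of_nonneg_right (hw j).2 (sq_nonneg _)
      _ ≤ K * (C * ‖u‖ ^ 2) := by rw [← mul_sum]; exact mul_le_mul_of_nonneg_left (hT u) hK
  refine ContinuousLinearMap.opNorm_le_bound₂ _ (mul_nonneg hK hC) fun u v => ?_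
  simp only [_root_.sum_apply, ContinuousLinearMap.smulRight_apply,
    smul_apply, smul_eq_mul, Real.norm_eq_abs]
  refine abs_le_of_sq_le_sq ?_ (by positivity)
  calc (∑ j, w j * T j u * T j v) ^ 2
      ≤ (∑ j, w j * T j u ^ 2) * ∑ j, w j * T j v ^ 2 :=
        sum_sq_le_sum_mul_sum_of_sq_le_mul _ (fun j _ => mul_nonneg (hw j).1 (sq_nonneg _))
          (fun j _ => mul_nonneg (hw j).1 (sq_nonneg _)) fun j _ => le_of_eq (by ring)
    _ ≤ (K * (C * ‖u‖ ^ 2)) * (K * (C * ‖v‖ ^ 2)) :=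
        mul_le_mul (weighted_le u) (weighted_le v)
          (sum_nonneg fun j _ => mul_nonneg (hw j).1 (sq_nonneg _)) (by positivity)
    _ = (K * C * ‖u‖ * ‖v‖) ^ 2 := by ring

variable {ψ : ℝ → ℝ} (c : E →L[ℝ] ℝ) (T : ι → E →L[ℝ] ℝ)

theorem hasFDerivAt_add_sum_comp (hψ : Differentiable ℝ ψ) (x : E) :
    HasFDerivAt (fun x => c x + ∑ j, ψ (T j x)) (c + ∑ j, deriv ψ (T j x) • T j) x :=
  c.hasFDerivAt.add <| HasFDerivAt.fun_sum fun j _ =>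
    (hψ (T j x)).hasDerivAt.comp_hasFDerivAt x (T j).hasFDerivAt

theorem hasFDerivAt_add_sum_deriv_smul (hψ' : Differentiable ℝ (deriv ψ)) (x : E) :
    HasFDerivAt (fun x => c + ∑ j, deriv ψ (T j x) • T j)
      (∑ j, (deriv (deriv ψ) (T j x) • T j).smulRight (T j)) x := by
  refine (HasFDerivAt.fun_sum (u := univ) fun j _ => ?_).const_add c
  exact ((hψ' (T j x)).hasDerivAt.comp_hasFDerivAt x (T j).hasFDerivAt).smul_const (T j)

theorem hessian_le_and_norm_gradient_sub_le_add_sum_comp [CompleteSpace E]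
    (hψ : Differentiable ℝ ψ) (hψ' : Differentiable ℝ (deriv ψ)) {K C : ℝ}
    (hψ'' : ∀ t, 0 ≤ deriv (deriv ψ) t ∧ deriv (deriv ψ) t ≤ K) (hC : 0 ≤ C)
    (hT : ∀ u, ∑ j, T j u ^ 2 ≤ C * ‖u‖ ^ 2) :
    (∀ x u, iteratedFDeriv ℝ 2 (fun x => c x + ∑ j, ψ (T j x)) x ![u, u] ≤ K * C * ‖u‖ ^ 2) ∧
    (∀ x y, ‖gradient (fun x => c x + ∑ j, ψ (T j x)) x
      - gradient (fun x => c x + ∑ j, ψ (T j x)) y‖ ≤ K * C * ‖x - y‖) := by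
  have hF := hasFDerivAt_add_sum_comp c T hψ
  have hF' := hasFDerivAt_add_sum_deriv_smul c T hψ'
  have hF'' (x : E) := norm_sum_smul_smulRight_le T ((hψ'' 0).1.trans (hψ'' 0).2) hC
    (fun j => hψ'' (T j x)) hT
  exact ⟨iteratedFDeriv_two_apply_le_of_hasFDerivAt hF hF' hF'',
    norm_gradient_sub_le_of_hasFDerivAt hF hF' hF''⟩

end RidgeSum

noncomputable def chainDiff (n : ℕ) : Option (Fin n) → EuclideanSpace ℝ (Fin (n + 1)) →L[ℝ] ℝ
  | none => EuclideanSpace.proj (Fin.last n)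
  | some i => EuclideanSpace.proj i.succ - EuclideanSpace.proj i.castSucc

theorem sum_chainDiff_sq_le {n : ℕ} (u : EuclideanSpace ℝ (Fin (n + 1))) :
    ∑ j, chainDiff n j u ^ 2 ≤ 4 * ‖u‖ ^ 2 := by
  have hnorm : ‖u‖ ^ 2 = ∑ i, u i ^ 2 := by simp [EuclideanSpace.norm_sq_eq]
  have hsucc : ∑ i, u i ^ 2 = u 0 ^ 2 + ∑ i : Fin n, u i.succ ^ 2 := Fin.sum_univ_succ _
  have hcast : ∑ i, u i ^ 2 = ∑ i : Fin n, u i.castSucc ^ 2 + u (Fin.last n) ^ 2 :=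
    Fin.sum_univ_castSucc _
  have hdiff : ∑ i : Fin n, (u i.succ - u i.castSucc) ^ 2
      ≤ 2 * ∑ i : Fin n, u i.succ ^ 2 + 2 * ∑ i : Fin n, u i.castSucc ^ 2 := by
    rw [mul_sum, mul_sum, ← sum_add_distrib]
    exact sum_le_sum fun i _ => by nlinarith [sq_nonneg (u i.succ + u i.castSucc)]
  simp only [Fintype.sum_option, chainDiff, sub_apply, PiLp.proj_apply]
  nlinarith [sq_nonneg (u 0), sq_nonneg (u (Fin.last n))]

theorem stmt_7 (N : ℕ) (hN : 2 ≤ N) (H ζ : ℝ)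
    (ψ : ℝ → ℝ) (hψ : ContDiff ℝ 2 ψ)
    (hψ'' : ∀ x : ℝ, 0 ≤ deriv (deriv ψ) x ∧ deriv (deriv ψ) x ≤ H / 4) :
    let F : EuclideanSpace ℝ (Fin N) → ℝ := fun x =>
      -(deriv ψ ζ) * x ⟨0, by omega⟩ + ψ (x ⟨N - 1, by omega⟩)
        + ∑ i : Fin (N - 1), ψ (x ⟨i.1 + 1, by have := i.2; omega⟩ - x ⟨i.1, by have := i.2; omega⟩)
    (∀ (x u : EuclideanSpace ℝ (Fin N)), iteratedFDeriv ℝ 2 F x ![u, u] ≤ H * ‖u‖ ^ 2) ∧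
    (∀ x y : EuclideanSpace ℝ (Fin N), ‖gradient F x - gradient F y‖ ≤ H * ‖x - y‖) := by
  obtain ⟨n, rfl⟩ : ∃ n, N = n + 1 := ⟨N - 1, by omega⟩
  intro F
  have hF : F = fun x => (-(deriv ψ ζ) • EuclideanSpace.proj 0) x + ∑ j, ψ (chainDiff n j x) := by
    funext x
    simp only [Fintype.sum_option, chainDiff, sub_apply, PiLp.proj_apply, smul_apply, smul_eq_mul]
    exact add_assoc _ _ _
  have hψ' : ContDiff ℝ 1 (deriv ψ) := (contDiff_succ_iff_deriv.mp hψ).2.2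
  have hH4 : H / 4 * 4 = H := by ring
  rw [hF, ← hH4]
  exact hessian_le_and_norm_gradient_sub_le_add_sum_comp _ _ (hψ.differentiable (by norm_num))
    (hψ'.differentiable one_ne_zero) hψ'' (by norm_num) sum_chainDiff_sq_le
end

section
/- The function Γ̃(t) defined as 0 for t ≤ 0, as (∫₀^t exp(−1/(s(1−s))) ds)/(∫₀¹ exp(−1/(s(1−s))) ds) for 0 < t < 1, and as 1 for t ≥ 1, is twice continuously differentiable on ℝ, and satisfies |Γ̃'(t)| ≤ 4 and |Γ̃''(t)| ≤ 60 for all t. -/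
/-!
Up to the factor `1 / C`, `Γ̃` is the primitive of the bump `φ(s) = exp (-1 / (s (1 - s)))` on
`(0, 1)`, extended by zero; `φ s = expNegInvGlue s * expNegInvGlue (1 - s)` is smooth, so
`Γ̃' = φ / C` and `Γ̃'' = φ' / C`. With `u = 1 / (s (1 - s)) = 4 + (1 - 2s)² / (s (1 - s)) ≥ 4`
we have `φ = e⁻ᵘ ≤ e⁻⁴` and `|φ'| = |1 - 2s| u² e⁻ᵘ ≤ 16 e⁻⁴`, while `e⁻ˣ ≥ 1 - x` gives
`φ s ≥ e⁻⁴ (1 - (100/21) (1 - 2s)²)` on `[3/10, 7/10]`, hence `C ≥ (94/315) e⁻⁴`.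
-/

open Real MeasureTheory Set Filter Topology

theorem hasDerivAt_expNegInvGlue {x : ℝ} (hx : 0 < x) :
    HasDerivAt expNegInvGlue (expNegInvGlue x * x⁻¹ ^ 2) x := by
  have hev : (fun y => exp (-y⁻¹)) =ᶠ[𝓝 x] expNegInvGlue := by
    filter_upwards [Ioi_mem_nhds hx] with y hy
    rw [expNegInvGlue, if_neg (not_le.2 hy)]
  have h : HasDerivAt (fun y => exp (-y⁻¹)) (exp (-x⁻¹) * x⁻¹ ^ 2) x :=
    ((hasDerivAt_inv hx.ne').neg.exp).congr_deriv (by simp only [Pi.neg_apply]; ring)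
  rw [← hev.eq_of_nhds]
  exact h.congr_of_eventuallyEq hev.symm

theorem sq_mul_exp_neg_le {a u : ℝ} (ha : 2 ≤ a) (hau : a ≤ u) :
    u ^ 2 * exp (-u) ≤ a ^ 2 * exp (-a) := by
  have hlin : u ≤ a * exp ((u - a) / 2) := by
    -- `u / a ≤ 1 + (u - a) / 2 ≤ exp ((u - a) / 2)` because `a ≥ 2`
    have := add_one_le_exp ((u - a) / 2)
    nlinarith
  have hsq : u ^ 2 ≤ a ^ 2 * exp (u - a) := by
    calc u ^ 2 ≤ (a * exp ((u - a) / 2)) ^ 2 := pow_le_pow_left₀ (by linarith) hlin 2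
      _ = a ^ 2 * exp (u - a) := by rw [mul_pow, ← exp_nat_mul]; ring_nf
  calc u ^ 2 * exp (-u) ≤ a ^ 2 * exp (u - a) * exp (-u) := by gcongr
    _ = a ^ 2 * exp (-a) := by rw [mul_assoc, ← exp_add]; ring_nf

theorem contDiff_integral_of_contDiff {E : Type*} [NormedAddCommGroup E] [NormedSpace ℝ E]
    [CompleteSpace E] {f : ℝ → E} {n : ℕ∞} (hf : ContDiff ℝ n f) (a : ℝ) :
    ContDiff ℝ (n + 1) (fun t => ∫ s in a..t, f s) := by
  have hcont : Continuous f := hf.continuous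
  refine contDiff_succ_iff_deriv.2 ⟨fun t => ?_, by simp, ?_⟩
  · exact (hcont.integral_hasStrictDerivAt a t).hasDerivAt.differentiableAt
  · rwa [funext (hcont.deriv_integral f a)]

theorem one_div_mul_one_sub_eq {s : ℝ} (hs0 : s ≠ 0) (hs1 : s ≠ 1) :
    1 / (s * (1 - s)) = 4 + (1 - 2 * s) ^ 2 / (s * (1 - s)) := by
  have : 1 - s ≠ 0 := sub_ne_zero.2 (Ne.symm hs1)
  field_simp
  ring

noncomputable def intervalBump (s : ℝ) : ℝ := expNegInvGlue s * expNegInvGlue (1 - s)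

namespace intervalBump

protected theorem contDiff {n : ℕ∞} : ContDiff ℝ n intervalBump :=
  expNegInvGlue.contDiff.mul (expNegInvGlue.contDiff.comp (contDiff_const.sub contDiff_id))

protected theorem continuous : Continuous intervalBump := intervalBump.contDiff (n := 0).continuous

theorem nonneg (s : ℝ) : 0 ≤ intervalBump s :=
  mul_nonneg (expNegInvGlue.nonneg _) (expNegInvGlue.nonneg _)

theorem eq_exp {s : ℝ} (hs : s ∈ Ioo 0 1) : intervalBump s = exp (-(1 / (s * (1 - s)))) := by
  have h1 : 0 < 1 - s := sub_pos.2 hs.2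
  rw [intervalBump, expNegInvGlue, expNegInvGlue, if_neg (not_le.2 hs.1), if_neg (not_le.2 h1),
    ← exp_add]
  congr 1
  field_simp [hs.1.ne', h1.ne']
  ring

theorem eq_zero_of_notMem_Ioo {s : ℝ} (hs : s ∉ Ioo 0 1) : intervalBump s = 0 := by
  rcases not_and_or.1 hs with h | h
  · rw [intervalBump, expNegInvGlue.zero_of_nonpos (not_lt.1 h), zero_mul]
  · rw [intervalBump, expNegInvGlue.zero_of_nonpos (x := 1 - s) (by linarith [not_lt.1 h]),
      mul_zero]

theorem le_exp_neg_four (s : ℝ) : intervalBump s ≤ exp (-4) := by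
  by_cases hs : s ∈ Ioo 0 1
  · have hpos : 0 < s * (1 - s) := mul_pos hs.1 (sub_pos.2 hs.2)
    rw [eq_exp hs, one_div_mul_one_sub_eq hs.1.ne' (ne_of_lt hs.2)]
    gcongr
    linarith [div_nonneg (sq_nonneg (1 - 2 * s)) hpos.le]
  · rw [eq_zero_of_notMem_Ioo hs]
    positivity

theorem hasDerivAt {s : ℝ} (hs : s ∈ Ioo 0 1) :
    HasDerivAt intervalBump (intervalBump s * (s⁻¹ ^ 2 - (1 - s)⁻¹ ^ 2)) s := by
  have hright : HasDerivAt (fun x => expNegInvGlue (1 - x))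
      (-(expNegInvGlue (1 - s) * (1 - s)⁻¹ ^ 2)) s :=
    ((hasDerivAt_expNegInvGlue (sub_pos.2 hs.2)).comp s ((hasDerivAt_id s).const_sub 1)).congr_deriv
      (by ring)
  exact ((hasDerivAt_expNegInvGlue hs.1).mul hright).congr_deriv (by rw [intervalBump]; ring)

theorem abs_deriv_le_of_mem_Ioo {s : ℝ} (hs : s ∈ Ioo 0 1) :
    |deriv intervalBump s| ≤ 16 * exp (-4) := by
  have hpos : 0 < s * (1 - s) := mul_pos hs.1 (sub_pos.2 hs.2)
  set u := 1 / (s * (1 - s)) with hu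
  have hu4 : 4 ≤ u := by
    rw [hu, one_div_mul_one_sub_eq hs.1.ne' (ne_of_lt hs.2)]
    linarith [div_nonneg (sq_nonneg (1 - 2 * s)) hpos.le]
  have hdiff : s⁻¹ ^ 2 - (1 - s)⁻¹ ^ 2 = (1 - 2 * s) * u ^ 2 := by
    rw [hu]
    field_simp [hs.1.ne', (sub_pos.2 hs.2).ne']
    ring
  have h12 : |1 - 2 * s| ≤ 1 := abs_le.2 ⟨by linarith [hs.2], by linarith [hs.1]⟩
  rw [(hasDerivAt hs).deriv, eq_exp hs, hdiff, abs_mul, abs_mul, abs_exp,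
    abs_of_nonneg (sq_nonneg u)]
  calc exp (-u) * (|1 - 2 * s| * u ^ 2) = |1 - 2 * s| * (u ^ 2 * exp (-u)) := by ring
    _ ≤ u ^ 2 * exp (-u) := mul_le_of_le_one_left (by positivity) h12
    _ ≤ 4 ^ 2 * exp (-4) := sq_mul_exp_neg_le (by norm_num) hu4
    _ = 16 * exp (-4) := by norm_num

theorem deriv_eq_zero_of_notMem_Icc {s : ℝ} (hs : s ∉ Icc 0 1) : deriv intervalBump s = 0 := by
  have hev : intervalBump =ᶠ[𝓝 s] fun _ => 0 := by
    filter_upwards [isClosed_Icc.isOpen_compl.mem_nhds hs] with x hx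
    exact eq_zero_of_notMem_Ioo fun h => hx (Ioo_subset_Icc_self h)
  rw [hev.deriv_eq, deriv_const]

/-- At `0` and `1` the bound follows by continuity of `φ'` from the dense set `{0, 1}ᶜ`. -/
theorem abs_deriv_le (s : ℝ) : |deriv intervalBump s| ≤ 16 * exp (-4) := by
  have hclosed : IsClosed {x | |deriv intervalBump x| ≤ 16 * exp (-4)} :=
    isClosed_le (intervalBump.contDiff (n := 1).continuous_deriv le_rfl).abs continuous_const
  have hdense : Dense ({0, 1} : Set ℝ)ᶜ := (toFinite _).countable.dense_compl ℝ
  have hsub : ({0, 1} : Set ℝ)ᶜ ⊆ {x | |deriv intervalBump x| ≤ 16 * exp (-4)} := by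
    intro x hx
    simp only [mem_compl_iff, mem_insert_iff, mem_singleton_iff, not_or] at hx
    by_cases hx' : x ∈ Icc 0 1
    · exact abs_deriv_le_of_mem_Ioo ⟨lt_of_le_of_ne hx'.1 (Ne.symm hx.1), lt_of_le_of_ne hx'.2 hx.2⟩
    · simp only [mem_ofPred_eq, deriv_eq_zero_of_notMem_Icc hx', abs_zero]
      positivity
  exact hclosed.closure_subset_iff.2 hsub (hdense.closure_eq ▸ mem_univ s)

theorem exp_neg_four_mul_le {s : ℝ} (hs : s ∈ Icc (3 / 10) (7 / 10)) :
    exp (-4) * (1 - 100 / 21 * (1 - 2 * s) ^ 2) ≤ intervalBump s := by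
  have hs' : s ∈ Ioo 0 1 := ⟨by linarith [hs.1], by linarith [hs.2]⟩
  have hpos : 0 < s * (1 - s) := mul_pos hs'.1 (sub_pos.2 hs'.2)
  have hratio : (1 - 2 * s) ^ 2 / (s * (1 - s)) ≤ 100 / 21 * (1 - 2 * s) ^ 2 := by
    have hk : 21 / 100 ≤ s * (1 - s) := by nlinarith [hs.1, hs.2]
    rw [div_le_iff₀ hpos]
    nlinarith [mul_le_mul_of_nonneg_left hk (sq_nonneg (1 - 2 * s))]
  rw [eq_exp hs', one_div_mul_one_sub_eq hs'.1.ne' (ne_of_lt hs'.2), neg_add, exp_add]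
  gcongr
  linarith [add_one_le_exp (-((1 - 2 * s) ^ 2 / (s * (1 - s))))]

theorem integral_polynomial_minorant :
    ∫ s in (3 / 10 : ℝ)..(7 / 10), (1 - 100 / 21 * (1 - 2 * s) ^ 2) = 94 / 315 := by
  have hF (x : ℝ) : HasDerivAt (fun x => x + 50 / 63 * (1 - 2 * x) ^ 3)
      (1 - 100 / 21 * (1 - 2 * x) ^ 2) x :=
    ((hasDerivAt_id' x).add ((((hasDerivAt_id' x).const_mul 2).const_sub 1).pow 3
      |>.const_mul (50 / 63))).congr_deriv (by ring)
  rw [intervalIntegral.integral_eq_sub_of_hasDerivAt (fun x _ => hF x)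
    ((by fun_prop : Continuous fun x : ℝ => 1 - 100 / 21 * (1 - 2 * x) ^ 2).intervalIntegrable _ _)]
  norm_num

theorem le_integral_zero_one : 94 / 315 * exp (-4) ≤ ∫ s in (0 : ℝ)..1, intervalBump s := by
  calc 94 / 315 * exp (-4)
      = ∫ s in (3 / 10 : ℝ)..(7 / 10), exp (-4) * (1 - 100 / 21 * (1 - 2 * s) ^ 2) := by
        rw [intervalIntegral.integral_const_mul, integral_polynomial_minorant, mul_comm]
    _ ≤ ∫ s in (3 / 10 : ℝ)..(7 / 10), intervalBump s :=
        intervalIntegral.integral_mono_on (by norm_num)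
          ((by fun_prop : Continuous fun s : ℝ =>
            exp (-4) * (1 - 100 / 21 * (1 - 2 * s) ^ 2)).intervalIntegrable _ _)
          (intervalBump.continuous.intervalIntegrable _ _) fun s hs => exp_neg_four_mul_le hs
    _ ≤ ∫ s in (0 : ℝ)..1, intervalBump s :=
        intervalIntegral.integral_mono_interval (by norm_num) (by norm_num) (by norm_num)
          (Eventually.of_forall nonneg) (intervalBump.continuous.intervalIntegrable _ _)

theorem integral_exp_eq {t : ℝ} (ht : 0 ≤ t) (ht1 : t ≤ 1) :
    ∫ s in (0 : ℝ)..t, exp (-(1 / (s * (1 - s)))) = ∫ s in (0 : ℝ)..t, intervalBump s := by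
  rw [intervalIntegral.integral_of_le ht, intervalIntegral.integral_of_le ht,
    integral_Ioc_eq_integral_Ioo, integral_Ioc_eq_integral_Ioo]
  exact setIntegral_congr_fun measurableSet_Ioo fun s hs => (eq_exp ⟨hs.1, hs.2.trans_le ht1⟩).symm

theorem integral_eq_zero_of_nonpos {t : ℝ} (ht : t ≤ 0) :
    ∫ s in (0 : ℝ)..t, intervalBump s = 0 := by
  rw [intervalIntegral.integral_congr (g := fun _ => 0), intervalIntegral.integral_zero]
  intro s hs
  rw [uIcc_of_ge ht] at hs
  exact eq_zero_of_notMem_Ioo fun h => (h.1.trans_le hs.2).false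

theorem integral_eq_of_one_le {t : ℝ} (ht : 1 ≤ t) :
    ∫ s in (0 : ℝ)..t, intervalBump s = ∫ s in (0 : ℝ)..1, intervalBump s := by
  rw [← intervalIntegral.integral_add_adjacent_intervals (b := 1)
    (intervalBump.continuous.intervalIntegrable _ _)
    (intervalBump.continuous.intervalIntegrable _ _),
    add_eq_left, intervalIntegral.integral_congr (g := fun _ => 0), intervalIntegral.integral_zero]
  intro s hs
  rw [uIcc_of_le ht] at hs
  exact eq_zero_of_notMem_Ioo fun h => (h.2.trans_le hs.1).false

end intervalBump

theorem stmt_11 :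
    let C : ℝ := ∫ s in (0:ℝ)..1, Real.exp (-(1 / (s * (1 - s))))
    let Γ : ℝ → ℝ := fun t =>
      if t ≤ 0 then 0
      else if t < 1 then (∫ s in (0:ℝ)..t, Real.exp (-(1 / (s * (1 - s))))) / C
      else 1
    ContDiff ℝ 2 Γ ∧ (∀ t : ℝ, |deriv Γ t| ≤ 4) ∧ (∀ t : ℝ, |deriv (deriv Γ) t| ≤ 60) := by
  intro C Γ
  set Z := ∫ s in (0 : ℝ)..1, intervalBump s
  have hZ : 94 / 315 * exp (-4) ≤ Z := intervalBump.le_integral_zero_one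
  have hZpos : 0 < Z := lt_of_lt_of_le (by positivity) hZ
  have hΓ : Γ = fun t => (∫ s in (0 : ℝ)..t, intervalBump s) / Z := by
    funext t
    simp only [Γ, C, intervalBump.integral_exp_eq zero_le_one le_rfl]
    split_ifs with h0 h1
    · rw [intervalBump.integral_eq_zero_of_nonpos h0, zero_div]
    · rw [intervalBump.integral_exp_eq (not_le.1 h0).le h1.le]
    · rw [intervalBump.integral_eq_of_one_le (not_lt.1 h1), div_self hZpos.ne']
  have hΓ' : deriv Γ = fun t => intervalBump t / Z := by
    funext t
    rw [hΓ, deriv_div_const, intervalBump.continuous.deriv_integral]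
  refine ⟨?_, fun t => ?_, fun t => ?_⟩
  · rw [hΓ]
    exact (contDiff_integral_of_contDiff (n := 1) intervalBump.contDiff 0).div_const Z
  · rw [hΓ', abs_div, abs_of_nonneg (intervalBump.nonneg t), abs_of_pos hZpos, div_le_iff₀ hZpos]
    linarith [intervalBump.le_exp_neg_four t, exp_pos (-4)]
  · rw [hΓ', deriv_div_const, abs_div, abs_of_pos hZpos, div_le_iff₀ hZpos]
    linarith [intervalBump.abs_deriv_le t, exp_pos (-4)]
end

section
/- The function x ↦ (c/2)·max{0, ‖x‖ − b/2}² on ℝ^d (with c, b > 0) is convex and c-smooth everywhere, and is (c/2)-strongly convex on the set {x : ‖x‖ ≥ b}. -/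
/-!
Write `r = b / 2`. The function is `(c / 2) φ²` with `φ x = max 0 (‖x‖ - r)` the distance from `x`
to the closed ball of radius `r`; `φ` is convex and nonnegative, so `φ²` is convex. Its gradient
is `c (x - P x)`, where `P` is the nearest-point projection onto the ball, and `x ↦ x - P x` is
`1`-Lipschitz. Where `‖x‖ > r` the Hessian is `c ((1 - r / ‖x‖) I + (r / ‖x‖³) x xᵀ)`, which
dominates `(c / 2) I` as soon as `‖x‖ ≥ 2 r = b`.
-/

open RealInnerProductSpace Filter Topology Asymptotics

theorem hasDerivAt_max_zero_sq (t : ℝ) :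
    HasDerivAt (fun s : ℝ => max 0 s ^ 2) (2 * max 0 t) t := by
  rw [hasDerivAt_iff_isLittleO_nhds_zero]
  have hbound : ∀ h : ℝ, |max 0 (t + h) ^ 2 - max 0 t ^ 2 - h * (2 * max 0 t)| ≤ |h ^ 2| := by
    intro h
    rw [abs_of_nonneg (sq_nonneg h), abs_le]
    rcases le_total 0 t with ht | ht <;> rcases le_total 0 (t + h) with hth | hth <;>
      simp only [max_eq_left, max_eq_right, *] <;> constructor <;> nlinarith
  exact (IsBigO.of_bound 1 (Eventually.of_forall fun h => by simpa using hbound h))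
    |>.trans_isLittleO (isLittleO_pow_id one_lt_two)

variable {E : Type*} [NormedAddCommGroup E] [InnerProductSpace ℝ E]

theorem hasFDerivAt_norm_of_ne_zero {x : E} (hx : x ≠ 0) :
    HasFDerivAt (fun y : E => ‖y‖) (‖x‖⁻¹ • innerSL ℝ x) x := by
  have hsqrt := (Real.hasDerivAt_sqrt (pow_ne_zero 2 (norm_ne_zero_iff.2 hx))).comp_hasFDerivAt x
    (hasStrictFDerivAt_norm_sq x).hasFDerivAt
  simp only [Function.comp_def, Real.sqrt_sq (norm_nonneg _)] at hsqrt
  refine hsqrt.congr_fderiv ?_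
  rw [two_nsmul, ← two_smul ℝ, smul_smul]
  congr 1
  field_simp

theorem norm_smul_sub_smul_le_norm_sub {x y : E} {p q : ℝ} (hpq : p * q ≤ 1)
    (h : p * ‖x‖ - q * ‖y‖ = ‖x‖ - ‖y‖) : ‖p • x - q • y‖ ≤ ‖x - y‖ := by
  refine sq_le_sq₀ (norm_nonneg _) (norm_nonneg _) |>.1 ?_
  rw [norm_sub_sq_real, norm_sub_sq_real, norm_smul, norm_smul, real_inner_smul_left,
    real_inner_smul_right, Real.norm_eq_abs, Real.norm_eq_abs, mul_pow, mul_pow, sq_abs, sq_abs]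
  -- By Cauchy–Schwarz the difference of the squares is at least
  -- `(‖x‖ - ‖y‖)² - (p ‖x‖ - q ‖y‖)² = 0`.
  have hinner : ⟪x, y⟫ ≤ ‖x‖ * ‖y‖ := real_inner_le_norm x y
  have hsq : (p * ‖x‖ - q * ‖y‖) ^ 2 = (‖x‖ - ‖y‖) ^ 2 := by rw [h]
  nlinarith [mul_le_mul_of_nonneg_left hinner (sub_nonneg.2 hpq)]

/-- `x - P x`, where `P` is the nearest-point projection onto `Metric.closedBall 0 r`. -/
noncomputable def ballExcess (r : ℝ) (x : E) : E := (max 0 (‖x‖ - r) / ‖x‖) • x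

theorem ballExcess_of_norm_le {r : ℝ} {x : E} (h : ‖x‖ ≤ r) : ballExcess r x = 0 := by
  simp [ballExcess, max_eq_left (sub_nonpos.2 h)]

theorem ballExcess_of_le_norm {r : ℝ} {x : E} (h : r ≤ ‖x‖) :
    ballExcess r x = (1 - r / ‖x‖) • x := by
  rcases eq_or_ne x 0 with rfl | hx
  · simp [ballExcess]
  · rw [ballExcess, max_eq_right (sub_nonneg.2 h), sub_div, div_self (norm_ne_zero_iff.2 hx)]

theorem norm_ballExcess {r : ℝ} (hr : 0 ≤ r) (x : E) : ‖ballExcess r x‖ = max 0 (‖x‖ - r) := by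
  rcases le_total ‖x‖ r with h | h
  · simp [ballExcess_of_norm_le h, max_eq_left (sub_nonpos.2 h)]
  · rcases eq_or_ne x 0 with rfl | hx
    · simp [ballExcess, hr]
    rw [ballExcess_of_le_norm h, norm_smul, max_eq_right (sub_nonneg.2 h), Real.norm_eq_abs,
      abs_of_nonneg (sub_nonneg.2 ((div_le_one (norm_pos_iff.2 hx)).2 h))]
    field_simp

theorem lipschitzWith_one_ballExcess {r : ℝ} (hr : 0 ≤ r) :
    LipschitzWith 1 (ballExcess (E := E) r) := by
  have inside_outside : ∀ x y : E, ‖x‖ ≤ r → r ≤ ‖y‖ →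
      ‖ballExcess r x - ballExcess r y‖ ≤ ‖x - y‖ := by
    intro x y hx hy
    rw [ballExcess_of_norm_le hx, zero_sub, norm_neg, norm_ballExcess hr,
      max_eq_right (sub_nonneg.2 hy), norm_sub_rev]
    linarith [norm_sub_norm_le y x]
  refine LipschitzWith.of_dist_le_mul fun x y => ?_
  rw [NNReal.coe_one, one_mul, dist_eq_norm, dist_eq_norm]
  rcases le_total ‖x‖ r with hx | hx <;> rcases le_total ‖y‖ r with hy | hy
  · simp [ballExcess_of_norm_le hx, ballExcess_of_norm_le hy]
  · exact inside_outside x y hx hy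
  · rw [norm_sub_rev, norm_sub_rev x]; exact inside_outside y x hy hx
  · have factor : ∀ z : E, r ≤ ‖z‖ →
        0 ≤ 1 - r / ‖z‖ ∧ 1 - r / ‖z‖ ≤ 1 ∧ (1 - r / ‖z‖) * ‖z‖ = ‖z‖ - r := by
      intro z hz
      have h0 : 0 ≤ 1 - r / ‖z‖ := sub_nonneg.2 (div_le_one_of_le₀ hz (norm_nonneg z))
      have hnorm := norm_ballExcess hr z
      rw [ballExcess_of_le_norm hz, norm_smul, Real.norm_eq_abs, abs_of_nonneg h0,
        max_eq_right (sub_nonneg.2 hz)] at hnorm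
      exact ⟨h0, sub_le_self _ (div_nonneg hr (norm_nonneg z)), hnorm⟩
    obtain ⟨-, hp1, hpx⟩ := factor x hx
    obtain ⟨hq0, hq1, hqy⟩ := factor y hy
    rw [ballExcess_of_le_norm hx, ballExcess_of_le_norm hy]
    exact norm_smul_sub_smul_le_norm_sub (mul_le_one₀ hp1 hq0 hq1) (by rw [hpx, hqy]; ring)

noncomputable def ballPenalty (c r : ℝ) (x : E) : ℝ := c / 2 * max 0 (‖x‖ - r) ^ 2

theorem hasGradientAt_ballPenalty [CompleteSpace E] (c : ℝ) {r : ℝ} (hr : 0 < r) (x : E) :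
    HasGradientAt (ballPenalty c r) (c • ballExcess r x) x := by
  rw [hasGradientAt_iff_hasFDerivAt]
  rcases eq_or_ne x 0 with rfl | hx
  · have hzero : ballPenalty c r =ᶠ[𝓝 (0 : E)] fun _ => 0 := by
      filter_upwards [Metric.ball_mem_nhds (0 : E) hr] with y hy
      rw [mem_ball_zero_iff] at hy
      simp [ballPenalty, max_eq_left (sub_nonpos.2 hy.le)]
    simpa [ballExcess] using (hasFDerivAt_const (0 : ℝ) (0 : E)).congr_of_eventuallyEq hzero
  · have hprofile : HasDerivAt (fun t : ℝ => c / 2 * max 0 (t - r) ^ 2)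
        (c * max 0 (‖x‖ - r)) ‖x‖ := by
      refine (((hasDerivAt_max_zero_sq (‖x‖ - r)).comp ‖x‖
        ((hasDerivAt_id ‖x‖).sub_const r)).const_mul (c / 2)).congr_deriv ?_
      ring
    refine (hprofile.comp_hasFDerivAt x (hasFDerivAt_norm_of_ne_zero hx)).congr_fderiv ?_
    ext u
    simp only [smul_apply, coe_innerSL_apply, smul_eq_mul, ballExcess,
      map_smul, InnerProductSpace.toDual_apply_apply]
    ring

theorem convexOn_ballPenalty {c : ℝ} (hc : 0 ≤ c) (r : ℝ) :
    ConvexOn ℝ Set.univ (ballPenalty (E := E) c r) := by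
  have hdist : ConvexOn ℝ Set.univ fun x : E => max 0 (‖x‖ - r) :=
    (convexOn_const 0 convex_univ).sup (convexOn_univ_norm.sub (concaveOn_const r convex_univ))
  exact (hdist.pow (fun x _ => le_max_left _ _) 2).smul (div_nonneg hc zero_le_two)

theorem hasFDerivAt_ballExcess {r : ℝ} (hr : 0 ≤ r) {x : E} (hx : r < ‖x‖) :
    HasFDerivAt (ballExcess r)
      ((1 - r / ‖x‖) • ContinuousLinearMap.id ℝ E + (r / ‖x‖ ^ 3) • (innerSL ℝ x).smulRight x)
      x := by
  have hx0 : x ≠ 0 := norm_pos_iff.1 (hr.trans_lt hx)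
  have hnorm0 : ‖x‖ ≠ 0 := norm_ne_zero_iff.2 hx0
  have hlocal : (fun y : E => (1 - r * ‖y‖⁻¹) • y) =ᶠ[𝓝 x] ballExcess r := by
    filter_upwards [(isOpen_lt continuous_const continuous_norm).mem_nhds hx] with y hy
    rw [ballExcess_of_le_norm hy.le, div_eq_mul_inv]
  have hfactor := (((hasDerivAt_inv hnorm0).const_mul r).const_sub 1).comp_hasFDerivAt x
    (hasFDerivAt_norm_of_ne_zero hx0)
  refine ((hfactor.smul (hasFDerivAt_id x)).congr_of_eventuallyEq hlocal.symm).congr_fderiv ?_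
  ext u
  simp only [Function.comp_apply, mul_neg, neg_neg, smul_smul, id_eq, add_apply, smul_apply,
    ContinuousLinearMap.id_apply, ContinuousLinearMap.smulRight_apply, coe_innerSL_apply,
    smul_eq_mul]
  module

theorem iteratedFDeriv_two_ballPenalty [CompleteSpace E] (c : ℝ) {r : ℝ} (hr : 0 < r) {x : E}
    (hx : r < ‖x‖) (u : E) :
    iteratedFDeriv ℝ 2 (ballPenalty c r) x ![u, u] =
      c * ((1 - r / ‖x‖) * ‖u‖ ^ 2 + r / ‖x‖ ^ 3 * ⟪x, u⟫ ^ 2) := by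
  have hfderiv :
      fderiv ℝ (ballPenalty c r) = fun y => innerSL ℝ (E := E) (c • ballExcess r y) := by
    funext y
    rw [(hasGradientAt_ballPenalty c hr y).hasFDerivAt.fderiv]
    ext v
    simp
  have hsecond : HasFDerivAt (fun y => innerSL ℝ (E := E) (c • ballExcess r y)) _ x :=
    (innerSL ℝ (E := E)).hasFDerivAt.comp x ((hasFDerivAt_ballExcess hr.le hx).const_smul c)
  rw [iteratedFDeriv_two_apply, hfderiv, hsecond.fderiv]
  simp only [ContinuousLinearMap.comp_apply, smul_apply, add_apply, ContinuousLinearMap.id_apply,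
    ContinuousLinearMap.smulRight_apply, Matrix.cons_val_zero, Matrix.cons_val_one,
    Matrix.cons_val_fin_one, map_smul, map_add, smul_eq_mul]
  rw [innerSL_apply_apply, innerSL_apply_apply, real_inner_self_eq_norm_sq]
  ring

theorem half_mul_norm_sq_le_iteratedFDeriv_two_ballPenalty [CompleteSpace E] {c : ℝ} (hc : 0 ≤ c)
    {r : ℝ} (hr : 0 < r) {x : E} (hx : 2 * r ≤ ‖x‖) (u : E) :
    c / 2 * ‖u‖ ^ 2 ≤ iteratedFDeriv ℝ 2 (ballPenalty c r) x ![u, u] := by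
  have hxpos : 0 < ‖x‖ := by linarith
  rw [iteratedFDeriv_two_ballPenalty c hr (by linarith) u]
  have hfactor : 1 / 2 ≤ 1 - r / ‖x‖ := by
    have : r / ‖x‖ ≤ 1 / 2 := by rw [div_le_iff₀ hxpos]; linarith
    linarith
  have hradial : 0 ≤ r / ‖x‖ ^ 3 * ⟪x, u⟫ ^ 2 := by positivity
  nlinarith [mul_le_mul_of_nonneg_right hfactor (sq_nonneg ‖u‖)]

theorem stmt_14 (d : ℕ) (c b : ℝ) (hc : 0 < c) (hb : 0 < b) :
    let f : EuclideanSpace ℝ (Fin d) → ℝ := fun x => (c / 2) * max 0 (‖x‖ - b / 2) ^ 2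
    ConvexOn ℝ Set.univ f ∧
    (∀ x y : EuclideanSpace ℝ (Fin d), ‖gradient f x - gradient f y‖ ≤ c * ‖x - y‖) ∧
    (∀ x u : EuclideanSpace ℝ (Fin d), b ≤ ‖x‖ →
      (c / 2) * ‖u‖ ^ 2 ≤ iteratedFDeriv ℝ 2 f x ![u, u]) := by
  intro f
  have hr : 0 < b / 2 := half_pos hb
  refine ⟨convexOn_ballPenalty hc.le (b / 2), fun x y => ?_, fun x u hx =>
    half_mul_norm_sq_le_iteratedFDeriv_two_ballPenalty hc.le hr (by linarith) u⟩
  change ‖gradient (ballPenalty c (b / 2)) x - gradient (ballPenalty c (b / 2)) y‖ ≤ c * ‖x - y‖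
  rw [(hasGradientAt_ballPenalty c hr x).gradient, (hasGradientAt_ballPenalty c hr y).gradient,
    ← smul_sub, norm_smul, Real.norm_eq_abs, abs_of_pos hc]
  have hlip := (lipschitzWith_one_ballExcess (E := EuclideanSpace ℝ (Fin d)) hr.le).norm_sub_le x y
  rw [NNReal.coe_one, one_mul] at hlip
  exact mul_le_mul_of_nonneg_left hlip hc.le
end

section
/- Let X₁,…,X_M be independent Binomial(K, p) random variables with M ≥ 2, K ≥ 1, and 0 < p ≤ 1. Then E[max_{1≤m≤M} X_m] ≤ 2Kp + 3·log M + 3. -/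
/-!
The binomial generating function gives `E[2 ^ X] = (1 + p) ^ K`, so Markov's inequality applied
to `2 ^ X` bounds `P(X ≥ t)` by `(1 + p) ^ K / 2 ^ t`, and a union bound over the `M`
variables bounds the tail of the maximum by `M (1 + p) ^ K / 2 ^ t ≤ e ^ (K p + log M) / 2 ^ t`.
Summing tail probabilities, those below `a = ⌈(K p + log M) / log 2⌉` contribute at most `a`, and
the remaining ones form a geometric series of total mass at most `1`.
-/

open MeasureTheory ProbabilityTheory Real
open scoped ENNReal NNReal

set_option linter.deprecated false

lemma ENNReal.natCast_eq_tsum_ite_lt (k : ℕ) :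
    (k : ℝ≥0∞) = ∑' n : ℕ, if n < k then 1 else 0 := by
  rw [tsum_eq_sum (s := Finset.range k) fun n hn => by simpa using hn, Finset.sum_ite,
    Finset.filter_true_of_mem fun n hn => Finset.mem_range.1 hn]
  simp

lemma lintegral_natCast_eq_tsum_measure_lt {Ω : Type*} [MeasurableSpace Ω] (μ : Measure Ω)
    {f : Ω → ℕ} (hf : Measurable f) :
    ∫⁻ ω, (f ω : ℝ≥0∞) ∂μ = ∑' n : ℕ, μ {ω | n < f ω} := by
  have hs : ∀ n : ℕ, MeasurableSet {ω | n < f ω} := fun n => hf MeasurableSet.of_discrete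
  calc ∫⁻ ω, (f ω : ℝ≥0∞) ∂μ = ∫⁻ ω, ∑' n : ℕ, {ω | n < f ω}.indicator 1 ω ∂μ := by
        congr! 2 with ω
        rw [ENNReal.natCast_eq_tsum_ite_lt]
        simp [Set.indicator_apply]
    _ = ∑' n : ℕ, μ {ω | n < f ω} := by
        rw [lintegral_tsum fun n => (measurable_one.indicator (hs n)).aemeasurable]
        simp [lintegral_indicator_one (hs _)]

lemma lintegral_natCast_le_of_two_pow_mul_measure_le {Ω : Type*} [MeasurableSpace Ω]
    (μ : Measure Ω) [IsProbabilityMeasure μ] {f : Ω → ℕ} (hf : Measurable f) (a : ℕ)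
    (htail : ∀ t : ℕ, 2 ^ t * μ {ω | t ≤ f ω} ≤ 2 ^ a) :
    ∫⁻ ω, (f ω : ℝ≥0∞) ∂μ ≤ a + 1 := by
  have hshift : ∀ n : ℕ, μ {ω | n + a < f ω} ≤ 2⁻¹ ^ (n + 1) := by
    intro n
    have h : 2 ^ a * (2 ^ (n + 1) * μ {ω | n + a < f ω}) ≤ 2 ^ a * 1 := by
      have hset : {ω | n + a < f ω} = {ω | n + 1 + a ≤ f ω} := by ext; simp; omega
      rw [mul_one, hset, ← mul_assoc, ← pow_add, add_comm a]
      exact htail _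
    rw [← ENNReal.inv_pow, ENNReal.le_inv_iff_mul_le, mul_comm]
    exact (ENNReal.mul_le_mul_iff_right (pow_ne_zero _ two_ne_zero)
      (ENNReal.pow_ne_top ENNReal.ofNat_ne_top)).1 h
  calc ∫⁻ ω, (f ω : ℝ≥0∞) ∂μ
      = ∑ n ∈ Finset.range a, μ {ω | n < f ω} + ∑' n : ℕ, μ {ω | n + a < f ω} := by
        rw [lintegral_natCast_eq_tsum_measure_lt μ hf, ENNReal.summable.sum_add_tsum_nat_add']
    _ ≤ ∑ _n ∈ Finset.range a, 1 + ∑' n : ℕ, (2⁻¹ : ℝ≥0∞) ^ (n + 1) := by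
        gcongr with n
        · exact prob_le_one
        · exact hshift n
    _ = a + 1 := by
        rw [ENNReal.tsum_geometric_add_one, ENNReal.one_sub_inv_two, inv_inv,
          ENNReal.inv_mul_cancel two_ne_zero ENNReal.ofNat_ne_top]
        simp

lemma PMF.lintegral_pow_binomial (q : ℝ≥0) (hq : q ≤ 1) (K : ℕ) (z : ℝ≥0∞) :
    ∫⁻ n, z ^ n ∂((PMF.binomial q hq K).map Fin.val).toMeasure = (q * z + (1 - q)) ^ K := by
  rw [← PMF.toMeasure_map _ _ (measurable_of_countable _),
    lintegral_map (by fun_prop) (by fun_prop), lintegral_fintype, add_pow,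
    ← Fin.sum_univ_eq_sum_range]
  refine Finset.sum_congr rfl fun i _ => ?_
  rw [PMF.toMeasure_apply_singleton _ _ (measurableSet_singleton _), PMF.binomial_apply]
  push_cast
  ring

lemma two_pow_mul_measure_le_of_map_eq_binomial {Ω : Type*} [MeasurableSpace Ω]
    {μ : Measure Ω} {Y : Ω → ℕ} (hY : Measurable Y) {q : ℝ≥0} {hq : q ≤ 1} {K : ℕ}
    (hlaw : μ.map Y = ((PMF.binomial q hq K).map Fin.val).toMeasure) (t : ℕ) :
    2 ^ t * μ {ω | t ≤ Y ω} ≤ (1 + q) ^ K := by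
  calc 2 ^ t * μ {ω | t ≤ Y ω}
      ≤ 2 ^ t * μ {ω | (2 : ℝ≥0∞) ^ t ≤ 2 ^ Y ω} := by
        gcongr
        exact pow_le_pow_right₀ one_le_two
    _ ≤ ∫⁻ ω, 2 ^ Y ω ∂μ := mul_meas_ge_le_lintegral ((measurable_of_countable _).comp hY) _
    _ = ∫⁻ n, 2 ^ n ∂μ.map Y := (lintegral_map (measurable_of_countable _) hY).symm
    _ = (1 + q) ^ K := by
        rw [hlaw, PMF.lintegral_pow_binomial, mul_two, add_assoc,
          add_tsub_cancel_of_le (by exact_mod_cast hq), add_comm]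

lemma measure_le_finset_sup_le_sum {Ω ι β : Type*} [MeasurableSpace Ω] [LinearOrder β]
    [OrderBot β] (μ : Measure Ω) {s : Finset ι} (hs : s.Nonempty) (X : ι → Ω → β) (t : β) :
    μ {ω | t ≤ s.sup (X · ω)} ≤ ∑ i ∈ s, μ {ω | t ≤ X i ω} := by
  refine (measure_mono fun ω hω => ?_).trans (measure_biUnion_finset_le s _)
  obtain ⟨i, hi, hsup⟩ := s.exists_mem_eq_sup hs (X · ω)
  exact Set.mem_biUnion hi (show t ≤ X i ω from hsup ▸ hω)

lemma mul_one_add_pow_le_two_pow_ceil {m x : ℝ} (hm : 0 < m) (hx : 0 ≤ x) (K : ℕ) :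
    m * (1 + x) ^ K ≤ 2 ^ ⌈(K * x + log m) / log 2⌉₊ := by
  have ha := Nat.le_ceil ((K * x + log m) / log 2)
  rw [div_le_iff₀ (log_pos one_lt_two)] at ha
  calc m * (1 + x) ^ K ≤ exp (log m) * exp x ^ K := by
        rw [exp_log hm]
        gcongr
        linarith [add_one_le_exp x]
    _ = exp (K * x + log m) := by rw [← exp_nat_mul, ← exp_add, add_comm]
    _ ≤ exp (⌈(K * x + log m) / log 2⌉₊ * log 2) := exp_le_exp.2 ha
    _ = 2 ^ ⌈(K * x + log m) / log 2⌉₊ := by rw [exp_nat_mul, exp_log two_pos]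

lemma natCeil_div_log_two_add_one_le {y : ℝ} (hy : 0 ≤ y) :
    (⌈y / log 2⌉₊ : ℝ) + 1 ≤ 2 * y + 2 := by
  have hlog2 : 1 / 2 < log 2 := by linarith [log_two_gt_d9]
  have hdiv : y / log 2 ≤ 2 * y := by
    rw [div_le_iff₀ (by linarith)]
    nlinarith
  linarith [Nat.ceil_lt_add_one (div_nonneg hy (log_pos one_lt_two).le)]

theorem stmt_16 {Ω : Type*} [MeasurableSpace Ω] (μ : Measure Ω) [IsProbabilityMeasure μ]
    (M K : ℕ) (hM : 2 ≤ M)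
    (p : ℝ≥0∞) (hp : p ≤ 1)
    (X : Fin M → Ω → ℕ) (hmeas : ∀ m, Measurable (X m))
    (hdist : ∀ m, μ.map (X m) = ((PMF.binomial p.toNNReal (by simpa using ENNReal.toNNReal_mono ENNReal.one_ne_top hp) K).map Fin.val).toMeasure) :
    ∫ ω, ((Finset.univ.sup fun m => X m ω : ℕ) : ℝ) ∂μ ≤
      2 * K * p.toReal + 3 * Real.log M + 3 := by
  set f : Ω → ℕ := fun ω => Finset.univ.sup fun m => X m ω
  set a := ⌈(K * p.toReal + log M) / log 2⌉₊
  have hf : Measurable f := by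
    simpa only [f, ← Finset.sup_apply] using
      Finset.sup_induction measurable_const (fun _ hg _ hh => hg.sup hh) fun m _ => hmeas m
  have hM0 : (0 : ℝ) < M := by positivity
  have hbudget : (M : ℝ≥0∞) * (1 + p.toNNReal) ^ K ≤ 2 ^ a := by
    exact_mod_cast mul_one_add_pow_le_two_pow_ceil hM0 p.toNNReal.2 K
  have htail : ∀ t : ℕ, 2 ^ t * μ {ω | t ≤ f ω} ≤ 2 ^ a := fun t => calc
    2 ^ t * μ {ω | t ≤ f ω} ≤ ∑ m, 2 ^ t * μ {ω | t ≤ X m ω} := by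
      rw [← Finset.mul_sum]
      gcongr
      exact measure_le_finset_sup_le_sum μ (Finset.univ_nonempty_iff.2 ⟨⟨0, by omega⟩⟩) X t
    _ ≤ ∑ _m : Fin M, (1 + p.toNNReal : ℝ≥0∞) ^ K := by
      gcongr with m
      exact two_pow_mul_measure_le_of_map_eq_binomial (hmeas m) (hdist m) t
    _ ≤ 2 ^ a := by simpa using hbudget
  have hlint := lintegral_natCast_le_of_two_pow_mul_measure_le μ hf a htail
  calc ∫ ω, (f ω : ℝ) ∂μ = (∫⁻ ω, (f ω : ℝ≥0∞) ∂μ).toReal := by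
        simpa using integral_toReal (μ := μ) (f := fun ω => (f ω : ℝ≥0∞)) (by fun_prop) (by simp)
    _ ≤ a + 1 := by simpa [ENNReal.toReal_add] using ENNReal.toReal_mono (by simp) hlint
    _ ≤ 2 * (K * p.toReal + log M) + 2 := natCeil_div_log_two_add_one_le (by positivity)
    _ ≤ 2 * K * p.toReal + 3 * log M + 3 := by
        linarith [log_nonneg (show (1 : ℝ) ≤ M by exact_mod_cast (by omega : 1 ≤ M))]
end
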